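/- arXiv:2310.00262 — 4 statements merged into one kernel-verified Lean document; each statement's English description precedes it below -/
import Mathlib

section
/- Let P be a symmetric positive definite n×n real matrix and ρ, ε, μ > 0 scalars satisfying ε < sqrt(2ρμ/‖P‖), where ‖P‖ is the operator norm of P. Then the 2n×2n block matrix [[ρP, εP],[εP, 2μI]] is positive definite. -/
open Matrix

/-! The Schur complement of the block `ρP` is `2μ I - (ε²/ρ) P`. It is positive definite because
`xᵀ P x ≤ ‖P‖ xᵀ x` and the hypothesis on `ε` says `ε² ‖P‖ < 2ρμ`. -/

open scoped ComplexOrder in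
theorem Matrix.PosDef.posDef_fromBlocks₁₁_iff {𝕜 m n : Type*} [RCLike 𝕜] [Fintype m] [Fintype n]
    [DecidableEq m] [DecidableEq n] {A : Matrix m m 𝕜} (B : Matrix m n 𝕜) (D : Matrix n n 𝕜)
    (hA : A.PosDef) [Invertible A] :
    (fromBlocks A B Bᴴ D).PosDef ↔ (D - Bᴴ * A⁻¹ * B).PosDef := by
  have hdet : (fromBlocks A B Bᴴ D).det = A.det * (D - Bᴴ * A⁻¹ * B).det := by
    rw [det_fromBlocks₁₁, invOf_eq_nonsing_inv]
  constructor
  · intro h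
    refine ((hA.fromBlocks₁₁ B D).1 h.posSemidef).posDef_iff_det_ne_zero.2 ?_
    exact right_ne_zero_of_mul (hdet ▸ h.det_pos.ne')
  · intro h
    refine ((hA.fromBlocks₁₁ B D).2 h.posSemidef).posDef_iff_det_ne_zero.2 ?_
    rw [hdet]
    exact mul_ne_zero hA.det_pos.ne' h.det_pos.ne'

section RealMatrix

variable {n : Type*} [Fintype n] [DecidableEq n]

theorem Matrix.dotProduct_mulVec_le_norm_toEuclideanCLM_mul (A : Matrix n n ℝ) (x : n → ℝ) :
    x ⬝ᵥ A *ᵥ x ≤ ‖toEuclideanCLM (𝕜 := ℝ) (n := n) A‖ * (x ⬝ᵥ x) := by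
  set T := toEuclideanCLM (𝕜 := ℝ) (n := n) A
  set v : EuclideanSpace ℝ n := WithLp.toLp 2 x
  have hsq : x ⬝ᵥ x = ‖v‖ * ‖v‖ := by
    rw [← real_inner_self_eq_norm_mul_norm]
    simpa using (inner_toEuclideanCLM 1 v v).symm
  calc x ⬝ᵥ A *ᵥ x = inner ℝ v (T v) := (inner_toEuclideanCLM A v v).symm
    _ ≤ ‖v‖ * ‖T v‖ := real_inner_le_norm _ _
    _ ≤ ‖v‖ * (‖T‖ * ‖v‖) := by gcongr; exact T.le_opNorm v
    _ = ‖T‖ * (x ⬝ᵥ x) := by rw [hsq]; ring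

theorem Matrix.IsHermitian.posDef_smul_one_sub {A : Matrix n n ℝ} (hA : A.IsHermitian) {c : ℝ}
    (hc : ‖toEuclideanCLM (𝕜 := ℝ) (n := n) A‖ < c) : (c • (1 : Matrix n n ℝ) - A).PosDef := by
  refine .of_dotProduct_mulVec_pos ((isHermitian_one.smul (IsSelfAdjoint.all c)).sub hA)
    fun x hx => ?_
  have hxx : 0 < x ⬝ᵥ x := by simpa using dotProduct_star_self_pos_iff.2 hx
  have hA_le := A.dotProduct_mulVec_le_norm_toEuclideanCLM_mul x
  simp only [star_trivial, sub_mulVec, smul_mulVec, one_mulVec, dotProduct_sub, dotProduct_smul,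
    smul_eq_mul]
  nlinarith

theorem Matrix.IsHermitian.conjTranspose_smul_mul_inv_smul_mul_smul {P : Matrix n n ℝ}
    (hP : P.IsHermitian) (hdet : IsUnit P.det) {ρ : ℝ} (hρ : ρ ≠ 0) (ε : ℝ) :
    (ε • P)ᴴ * (ρ • P)⁻¹ * (ε • P) = (ε ^ 2 / ρ) • P := by
  have := invertibleOfNonzero hρ
  rw [conjTranspose_smul, hP.eq, Matrix.inv_smul (A := P) ρ hdet, invOf_eq_inv]
  simp only [Matrix.smul_mul, Matrix.mul_smul, smul_smul, mul_nonsing_inv P hdet, Matrix.one_mul,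
    star_trivial]
  congr 1
  field_simp

end RealMatrix

theorem sq_mul_lt_of_lt_sqrt_div {a b x : ℝ} (hx : 0 ≤ x) (hb : 0 ≤ b) (h : x < √(a / b)) :
    x ^ 2 * b < a := by
  have hsq := (Real.lt_sqrt hx).1 h
  rcases hb.eq_or_lt with rfl | hb
  · rw [div_zero] at hsq
    nlinarith
  · rwa [lt_div_iff₀ hb] at hsq

theorem block_lyapunov_matrix_posDef_general {n : ℕ} (P : Matrix (Fin n) (Fin n) ℝ)
    (hP : P.PosDef) (ρ ε μ : ℝ) (hρ : 0 < ρ) (hε : 0 < ε)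
    (hcond : ε < Real.sqrt (2 * ρ * μ / ‖toEuclideanCLM (𝕜 := ℝ) (n := Fin n) P‖)) :
    (fromBlocks (ρ • P) (ε • P) (ε • P) ((2 * μ) • (1 : Matrix (Fin n) (Fin n) ℝ))).PosDef := by
  have hN := sq_mul_lt_of_lt_sqrt_div hε.le (norm_nonneg _) hcond
  have hA : (ρ • P).PosDef := hP.smul hρ
  have := hA.isUnit.invertible
  have hschur : ((2 * μ) • 1 - (ε • P)ᴴ * (ρ • P)⁻¹ * (ε • P)).PosDef := by
    rw [hP.1.conjTranspose_smul_mul_inv_smul_mul_smul ((isUnit_iff_isUnit_det P).1 hP.isUnit)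
      hρ.ne' ε]
    refine (hP.1.smul (IsSelfAdjoint.all _)).posDef_smul_one_sub ?_
    rw [map_smul, norm_smul, Real.norm_of_nonneg (by positivity), div_mul_eq_mul_div,
      div_lt_iff₀ hρ]
    linarith
  have hB : (ε • P)ᴴ = ε • P := by rw [conjTranspose_smul, hP.1.eq, star_trivial]
  simpa only [hB] using (hA.posDef_fromBlocks₁₁_iff (ε • P) _).2 hschur

/-- For `P` symmetric positive definite, `ρ, ε, μ > 0` with
`ε < sqrt(2ρμ/‖P‖)` (`‖P‖` the operator norm), the block matrix
`[[ρP, εP],[εP, 2μI]]` is positive definite. -/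
theorem block_lyapunov_matrix_posDef {n : ℕ} (P : Matrix (Fin n) (Fin n) ℝ)
    (hP : P.PosDef) (ρ ε μ : ℝ) (hρ : 0 < ρ) (hε : 0 < ε) (hμ : 0 < μ)
    (hcond : ε < Real.sqrt (2 * ρ * μ / ‖toEuclideanCLM (𝕜 := ℝ) (n := Fin n) P‖)) :
    (fromBlocks (ρ • P) (ε • P) (ε • P) ((2 * μ) • (1 : Matrix (Fin n) (Fin n) ℝ))).PosDef :=
  block_lyapunov_matrix_posDef_general P hP ρ ε μ hρ hε hcond
end

section
/- Let P be symmetric positive definite with ‖P‖ ≤ λ_P, and L with ‖L‖ ≤ λ_L. Let α₂, k_x > 0 and k_d > (1/2)α₂k_xλ_L² + λ_P/α₂. Then the matrix D = 2(α₂k_d I − P) − α₂²k_x L Lᵀ is positive definite. -/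
open Matrix RealInnerProductSpace

/-! Since `xᵀ P x ≤ λ_P ‖x‖²` and `xᵀ L Lᵀ x = ‖Lᵀ x‖² ≤ λ_L² ‖x‖²` (as `‖Lᵀ‖ = ‖L‖`), the quadratic
form of `D` is at least `(2α₂k_d − 2λ_P − α₂²k_xλ_L²) ‖x‖²`, and the hypothesis on `k_d` says
exactly that this coefficient is positive. -/

namespace Matrix

variable {ι : Type*} [Fintype ι]

theorem dotProduct_self_eq_norm_toLp_sq (x : ι → ℝ) :
    x ⬝ᵥ x = ‖WithLp.toLp 2 x‖ ^ 2 := by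
  rw [← real_inner_self_eq_norm_sq, EuclideanSpace.inner_eq_star_dotProduct]
  rfl

theorem dotProduct_mulVec_le_of_norm_toEuclideanCLM_le [DecidableEq ι] {A : Matrix ι ι ℝ} {c : ℝ}
    (hA : ‖toEuclideanCLM (𝕜 := ℝ) A‖ ≤ c) (x : ι → ℝ) :
    x ⬝ᵥ A *ᵥ x ≤ c * (x ⬝ᵥ x) := by
  set y := WithLp.toLp 2 x
  have hAx : x ⬝ᵥ A *ᵥ x = ⟪y, toEuclideanCLM (𝕜 := ℝ) A y⟫ := by
    rw [toEuclideanCLM_toLp, EuclideanSpace.inner_eq_star_dotProduct, dotProduct_comm]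
    rfl
  rw [hAx, dotProduct_self_eq_norm_toLp_sq]
  calc ⟪y, toEuclideanCLM (𝕜 := ℝ) A y⟫ ≤ ‖y‖ * ‖toEuclideanCLM (𝕜 := ℝ) A y‖ :=
        real_inner_le_norm _ _
    _ ≤ ‖y‖ * (c * ‖y‖) := by
        gcongr
        exact (toEuclideanCLM (𝕜 := ℝ) A).le_of_opNorm_le hA y
    _ = c * ‖y‖ ^ 2 := by ring

theorem norm_toEuclideanCLM_transpose [DecidableEq ι] (A : Matrix ι ι ℝ) :
    ‖toEuclideanCLM (𝕜 := ℝ) Aᵀ‖ = ‖toEuclideanCLM (𝕜 := ℝ) A‖ := by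
  rw [← conjTranspose_eq_transpose_of_trivial, ← star_eq_conjTranspose, map_star,
    ContinuousLinearMap.star_eq_adjoint, LinearIsometryEquiv.norm_map]

theorem dotProduct_mul_transpose_mulVec_le [DecidableEq ι] {A : Matrix ι ι ℝ} {c : ℝ}
    (hA : ‖toEuclideanCLM (𝕜 := ℝ) A‖ ≤ c) (x : ι → ℝ) :
    x ⬝ᵥ (A * Aᵀ) *ᵥ x ≤ c ^ 2 * (x ⬝ᵥ x) := by
  have hAx : x ⬝ᵥ (A * Aᵀ) *ᵥ x = ‖toEuclideanCLM (𝕜 := ℝ) Aᵀ (WithLp.toLp 2 x)‖ ^ 2 := by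
    rw [toEuclideanCLM_toLp, ← dotProduct_self_eq_norm_toLp_sq, ← mulVec_mulVec,
      dotProduct_mulVec, ← mulVec_transpose]
  have hc : 0 ≤ c := (norm_nonneg _).trans hA
  rw [hAx, dotProduct_self_eq_norm_toLp_sq, ← mul_pow]
  gcongr
  exact (toEuclideanCLM (𝕜 := ℝ) Aᵀ).le_of_opNorm_le
    ((norm_toEuclideanCLM_transpose A).le.trans hA) _

theorem posDef_of_mul_dotProduct_self_le {A : Matrix ι ι ℝ} (hA : A.IsSymm) {c : ℝ}
    (hc : 0 < c) (hle : ∀ x, c * (x ⬝ᵥ x) ≤ x ⬝ᵥ A *ᵥ x) : A.PosDef := by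
  refine posDef_iff_dotProduct_mulVec.mpr ⟨hA, fun x hx => ?_⟩
  have : 0 < x ⬝ᵥ x := dotProduct_self_star_pos_iff.mpr hx
  exact (mul_pos hc this).trans_le (hle x)

end Matrix

/-- If `P` is symmetric positive definite with `‖P‖ ≤ λ_P`,
`‖L‖ ≤ λ_L` (operator norms), `α₂, k_x > 0` and
`k_d > (1/2)α₂k_xλ_L² + λ_P/α₂`, then
`D = 2(α₂k_d I − P) − α₂²k_x L Lᵀ` is positive definite. -/
theorem D_matrix_posDef {n : ℕ} (P L : Matrix (Fin n) (Fin n) ℝ)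
    (hP : P.PosDef) (lamP lamL α₂ kx kd : ℝ)
    (hlamP : ‖toEuclideanCLM (𝕜 := ℝ) (n := Fin n) P‖ ≤ lamP)
    (hlamL : ‖toEuclideanCLM (𝕜 := ℝ) (n := Fin n) L‖ ≤ lamL)
    (hα₂ : 0 < α₂) (hkx : 0 < kx)
    (hkd : kd > (1 / 2) * α₂ * kx * lamL ^ 2 + lamP / α₂) :
    ((2 : ℝ) • ((α₂ * kd) • (1 : Matrix (Fin n) (Fin n) ℝ) - P)
      - (α₂ ^ 2 * kx) • (L * Lᵀ)).PosDef := by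
  have hc : 0 < 2 * α₂ * kd - 2 * lamP - α₂ ^ 2 * kx * lamL ^ 2 := by
    have := mul_lt_mul_of_pos_left hkd (by positivity : 0 < 2 * α₂)
    field_simp at this
    linarith
  refine posDef_of_mul_dotProduct_self_le ?symm hc fun x => ?quadForm
  case symm =>
    have hPsymm : P.IsSymm := by
      rw [IsSymm, ← conjTranspose_eq_transpose_of_trivial]
      exact hP.1
    exact (((isSymm_one.smul _).sub hPsymm).smul _).sub ((isSymm_mul_transpose_self L).smul _)
  case quadForm =>
    have hPx := dotProduct_mulVec_le_of_norm_toEuclideanCLM_le hlamP x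
    have hLx := mul_le_mul_of_nonneg_left (dotProduct_mul_transpose_mulVec_le hlamL x)
      (by positivity : 0 ≤ α₂ ^ 2 * kx)
    simp only [sub_mulVec, smul_mulVec, one_mulVec, dotProduct_sub, dotProduct_smul, smul_eq_mul]
    linarith
end

section
/- Suppose the symmetric matrices P, L ∈ ℝ^{n×n} and positive scalar α₁ (with α₁ = k_d), ν = α₁/k_d = 1·α₁/k_d, and error trajectories satisfying ė_x = e_y + e_d, ė_y = −k_xL e_x − k_d e_y, ė_d = −α₁e_x − νe_y, with PL + LᵀP = I (normalized Lyapunov identity on the relevant subspace). Then the derivative of W = (1/2)(e_x,e_y)ᵀ[[α₁P, νP],[νP, α₂I]](e_x,e_y) + (1/2)e_dᵀPe_d along trajectories equals −(1/2)(e_x,e_y)ᵀ M (e_x,e_y) where M = [[(α₁/k_d)k_x I, α₂k_x Lᵀ],[α₂k_x L, 2(α₂k_d I − (α₁/k_d)P)]]; in particular Ẇ contains no e_d terms. -/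
/-!
Through `ė_x = e_y + e_d`, the first part of `W` pairs `e_d` with `α₁ P e_x + ν P e_y`; since
`ė_d = -α₁ e_x - ν e_y`, the term `½ e_dᵀ P e_d` contributes exactly the opposite, so `Ẇ` is a
quadratic form in `(e_x, e_y)`: the terms `ν k_x (⟪L e_x, P e_x⟫ + ⟪e_x, P L e_x⟫)` collapse to
`ν k_x ‖e_x‖²` by `PL + LᵀP = I`, and the mixed terms `⟪e_y, P e_x⟫`, `⟪e_x, P e_y⟫` carry the
coefficient `α₁ - ν k_d`, which vanishes since `ν = α₁ / k_d`.
-/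

open Matrix

variable {ι κ : Type*} [Fintype ι] [Fintype κ]

theorem hasDerivAt_dotProduct_mulVec (M : Matrix ι κ ℝ) {u : ℝ → ι → ℝ} {w : ℝ → κ → ℝ}
    {u' : ι → ℝ} {w' : κ → ℝ} {t : ℝ} (hu : ∀ i, HasDerivAt (fun s => u s i) (u' i) t)
    (hw : ∀ i, HasDerivAt (fun s => w s i) (w' i) t) :
    HasDerivAt (fun s => u s ⬝ᵥ (M *ᵥ w s)) (u' ⬝ᵥ (M *ᵥ w t) + u t ⬝ᵥ (M *ᵥ w')) t := by
  simp only [dotProduct, mulVec]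
  have hterm : ∀ i, HasDerivAt (fun s => u s i * ∑ j, M i j * w s j)
      (u' i * (∑ j, M i j * w t j) + u t i * (∑ j, M i j * w' j)) t :=
    fun i => (hu i).mul (HasDerivAt.fun_sum fun j _ => (hw j).const_mul (M i j))
  simpa only [Finset.sum_add_distrib] using HasDerivAt.fun_sum fun i _ => hterm i

section

variable [DecidableEq ι] {R : Type*} [CommRing R] (P L : Matrix ι ι R)

theorem quadForm_lyapunov_eq_dotProduct_self (hPL : P * L + Lᵀ * P = 1) (x : ι → R) :
    (L *ᵥ x) ⬝ᵥ (P *ᵥ x) + x ⬝ᵥ (P *ᵥ (L *ᵥ x)) = x ⬝ᵥ x := by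
  have h := congrArg (fun M : Matrix ι ι R => x ⬝ᵥ (M *ᵥ x)) hPL
  simp only [add_mulVec, dotProduct_add, ← mulVec_mulVec, one_mulVec,
    dotProduct_transpose_mulVec] at h
  linear_combination h + dotProduct_comm (L *ᵥ x) (P *ᵥ x)

theorem lyapunov_derivative_identity (hPL : P * L + Lᵀ * P = 1)
    {kx kd α₁ α₂ ν : R} (hν : ν * kd = α₁) (x y d : ι → R) :
    let A := fromBlocks (α₁ • P) (ν • P) (ν • P) (α₂ • (1 : Matrix ι ι R))
    let M := fromBlocks ((ν * kx) • (1 : Matrix ι ι R)) ((α₂ * kx) • Lᵀ) ((α₂ * kx) • L)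
      ((2 : R) • ((α₂ * kd) • (1 : Matrix ι ι R) - ν • P))
    let v := Sum.elim x y
    let v' := Sum.elim (y + d) (-(kx • (L *ᵥ x)) - kd • y)
    let d' := -(α₁ • x) - ν • y
    v' ⬝ᵥ (A *ᵥ v) + v ⬝ᵥ (A *ᵥ v') + (d' ⬝ᵥ (P *ᵥ d) + d ⬝ᵥ (P *ᵥ d')) = -(v ⬝ᵥ (M *ᵥ v)) := by
  intro A M v v' d'
  simp only [A, M, v, v', d', fromBlocks_mulVec, sumElim_dotProduct_sumElim,
    Sum.elim_comp_inl, Sum.elim_comp_inr, mulVec_add, mulVec_smul, mulVec_sub, add_mulVec,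
    smul_mulVec, one_mulVec, two_smul, sub_mulVec, mulVec_neg, dotProduct_add, add_dotProduct,
    dotProduct_sub, sub_dotProduct, dotProduct_smul, smul_dotProduct, dotProduct_neg,
    neg_dotProduct, smul_eq_mul, dotProduct_transpose_mulVec]
  linear_combination -ν * kx * quadForm_lyapunov_eq_dotProduct_self P L hPL x
    - (y ⬝ᵥ (P *ᵥ x) + x ⬝ᵥ (P *ᵥ y)) * hν
    - α₂ * kx * dotProduct_comm (L *ᵥ x) y

end

theorem lyapunov_W_derivative_general {n : ℕ} (P L : Matrix (Fin n) (Fin n) ℝ)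
    (hPL : P * L + Lᵀ * P = (1 : Matrix (Fin n) (Fin n) ℝ))
    (kx kd α₁ α₂ ν : ℝ) (hkd : 0 < kd)
    (hν : ν = α₁ / kd)
    (ex ey ed : ℝ → Fin n → ℝ)
    (hex : ∀ t i, HasDerivAt (fun s => ex s i) ((ey t + ed t) i) t)
    (hey : ∀ t i, HasDerivAt (fun s => ey s i)
      ((-(kx • (L *ᵥ ex t)) - kd • ey t) i) t)
    (hed : ∀ t i, HasDerivAt (fun s => ed s i) ((-(α₁ • ex t) - ν • ey t) i) t) :
    ∀ t : ℝ,
      HasDerivAt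
        (fun s =>
          (1 / 2) * (Sum.elim (ex s) (ey s) ⬝ᵥ
            ((fromBlocks (α₁ • P) (ν • P) (ν • P)
              (α₂ • (1 : Matrix (Fin n) (Fin n) ℝ))) *ᵥ Sum.elim (ex s) (ey s)))
          + (1 / 2) * (ed s ⬝ᵥ (P *ᵥ ed s)))
        (-(1 / 2) * (Sum.elim (ex t) (ey t) ⬝ᵥ
          ((fromBlocks ((α₁ / kd * kx) • (1 : Matrix (Fin n) (Fin n) ℝ))
              ((α₂ * kx) • Lᵀ) ((α₂ * kx) • L)
              ((2 : ℝ) • ((α₂ * kd) • (1 : Matrix (Fin n) (Fin n) ℝ)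
                - (α₁ / kd) • P))) *ᵥ Sum.elim (ex t) (ey t)))) t := by
  intro t
  have hνkd : ν * kd = α₁ := by rw [hν, div_mul_cancel₀ _ hkd.ne']
  have hv : ∀ i, HasDerivAt (fun s => Sum.elim (ex s) (ey s) i)
      (Sum.elim (ey t + ed t) (-(kx • (L *ᵥ ex t)) - kd • ey t) i) t := by
    rintro (i | i)
    exacts [hex t i, hey t i]
  have hW := ((hasDerivAt_dotProduct_mulVec
      (fromBlocks (α₁ • P) (ν • P) (ν • P) (α₂ • 1)) hv hv).const_mul (1 / 2 : ℝ)).add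
    ((hasDerivAt_dotProduct_mulVec P (hed t) (hed t)).const_mul (1 / 2 : ℝ))
  rw [← hν]
  refine hW.congr_deriv ?_
  linear_combination (1 / 2 : ℝ) * lyapunov_derivative_identity P L hPL hνkd (ex t) (ey t) (ed t)

/-- With `P` symmetric positive definite, `PL + LᵀP = I`,
`α₁ = k_d`, `ν = α₁/k_d`, and error trajectories satisfying
`ė_x = e_y + e_d`, `ė_y = −k_xL e_x − k_d e_y`, `ė_d = −α₁e_x − νe_y`, the derivative
of `W = (1/2)(e_x,e_y)ᵀ[[α₁P, νP],[νP, α₂I]](e_x,e_y) + (1/2)e_dᵀPe_d` along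
trajectories equals `−(1/2)(e_x,e_y)ᵀ M (e_x,e_y)` with
`M = [[(α₁/k_d)k_x I, α₂k_x Lᵀ],[α₂k_x L, 2(α₂k_d I − (α₁/k_d)P)]]`. -/
theorem lyapunov_W_derivative {n : ℕ} (P L : Matrix (Fin n) (Fin n) ℝ)
    (hP : P.PosDef) (hPL : P * L + Lᵀ * P = (1 : Matrix (Fin n) (Fin n) ℝ))
    (kx kd α₁ α₂ ν : ℝ) (hkx : 0 < kx) (hkd : 0 < kd) (hα₁ : 0 < α₁) (hα₂ : 0 < α₂)
    (hα₁kd : α₁ = kd) (hν : ν = α₁ / kd)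
    (ex ey ed : ℝ → Fin n → ℝ)
    (hex : ∀ t i, HasDerivAt (fun s => ex s i) ((ey t + ed t) i) t)
    (hey : ∀ t i, HasDerivAt (fun s => ey s i)
      ((-(kx • (L *ᵥ ex t)) - kd • ey t) i) t)
    (hed : ∀ t i, HasDerivAt (fun s => ed s i) ((-(α₁ • ex t) - ν • ey t) i) t) :
    ∀ t : ℝ,
      HasDerivAt
        (fun s =>
          (1 / 2) * (Sum.elim (ex s) (ey s) ⬝ᵥ
            ((fromBlocks (α₁ • P) (ν • P) (ν • P)
              (α₂ • (1 : Matrix (Fin n) (Fin n) ℝ))) *ᵥ Sum.elim (ex s) (ey s)))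
          + (1 / 2) * (ed s ⬝ᵥ (P *ᵥ ed s)))
        (-(1 / 2) * (Sum.elim (ex t) (ey t) ⬝ᵥ
          ((fromBlocks ((α₁ / kd * kx) • (1 : Matrix (Fin n) (Fin n) ℝ))
              ((α₂ * kx) • Lᵀ) ((α₂ * kx) • L)
              ((2 : ℝ) • ((α₂ * kd) • (1 : Matrix (Fin n) (Fin n) ℝ)
                - (α₁ / kd) • P))) *ᵥ Sum.elim (ex t) (ey t)))) t :=
  lyapunov_W_derivative_general P L hPL kx kd α₁ α₂ ν hkd hν ex ey ed hex hey hed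
end

section
/- Let A = [[0,1],[−α₁,0]] with α₁ > 0 and let f : ℝ≥0 → ℝ² satisfy ‖f(t)‖ ≤ K e^{−λt} with λ > 0. Then any solution z of ż = Az + f(t) converges (in sup-distance as t → ∞) to a solution of the unforced equation ż = Az; i.e., there exists a solution z₀ of ż₀ = Az₀ with ‖z(t) − z₀(t)‖ → 0 as t → ∞. -/
open Matrix Filter MeasureTheory Set NormedSpace Topology

/-!
Variation of constants: the function `u t = exp (-t • A) (z t)` has derivative
`exp (-t • A) (f t)`. When the flow `exp (t • A)` is bounded on all of `ℝ`, this derivative is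
integrable on `(0, ∞)`, so `u t` converges to some `v`, and
`z t - exp (t • A) v = exp (t • A) (u t - v) → 0`. For `A = !![0, 1; -α, 0]` with `α > 0` the
flow is bounded because it conserves the energy `α x₀² + x₁²`, which is comparable to `‖x‖²`.
-/

section LinearFlow

variable {E : Type*} [NormedAddCommGroup E] [NormedSpace ℝ E] [CompleteSpace E]
  (A : E →L[ℝ] E)

theorem hasDerivAt_exp_smul_apply (v : E) (t : ℝ) :
    HasDerivAt (fun s : ℝ => exp (s • A) v) (A (exp (t • A) v)) t := by
  simpa using (hasDerivAt_exp_smul_const' A t).clm_apply (hasDerivAt_const t v)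

theorem exp_smul_apply_exp_neg_smul_apply (t : ℝ) (v : E) :
    exp (t • A) (exp (-t • A) v) = v := by
  have hA : t • A ∈ Metric.eball (0 : E →L[ℝ] E) (expSeries ℝ (E →L[ℝ] E)).radius := by
    simp [expSeries_radius_eq_top]
  rw [neg_smul]
  exact DFunLike.congr_fun (invertibleExpOfMemBall hA).mul_invOf_self v

variable {A} in
theorem hasDerivAt_exp_neg_smul_apply {z f : ℝ → E} {t : ℝ}
    (hz : HasDerivAt z (A (z t) + f t) t) :
    HasDerivAt (fun s => exp (-s • A) (z s)) (exp (-t • A) (f t)) t := by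
  have hexp : HasDerivAt (fun s : ℝ => exp (-s • A)) (exp (-t • A) * -A) t := by
    simpa [smul_neg] using hasDerivAt_exp_smul_const (-A) t
  convert hexp.clm_apply hz using 1
  simp [map_add]

theorem exists_tendsto_sub_exp_smul_apply {M : ℝ} (hM : ∀ t : ℝ, ‖exp (t • A)‖ ≤ M)
    {f z : ℝ → E} (hf : IntegrableOn f (Ioi 0)) (hz : ∀ t, HasDerivAt z (A (z t) + f t) t) :
    ∃ v : E, Tendsto (fun t => z t - exp (t • A) v) atTop (𝓝 0) := by
  set u : ℝ → E := fun t => exp (-t • A) (z t)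
  have hg : IntegrableOn (fun t => exp (-t • A) (f t)) (Ioi 0) := by
    refine (hf.norm.const_mul M).mono' ?_ (ae_of_all _ fun t => ?_)
    · exact (ContinuousLinearMap.id ℝ (E →L[ℝ] E)).aestronglyMeasurable_comp₂
        ((differentiable_exp_smul_const ℝ A).continuous.comp continuous_neg).aestronglyMeasurable
        hf.aestronglyMeasurable
    · exact (ContinuousLinearMap.le_opNorm _ _).trans (by gcongr; exact hM _)
  have hu : Tendsto u atTop (𝓝 (limUnder atTop u)) :=
    tendsto_limUnder_of_hasDerivAt_of_integrableOn_Ioi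
      (fun t _ => hasDerivAt_exp_neg_smul_apply (hz t)) hg
  refine ⟨limUnder atTop u, squeeze_zero_norm (fun t => ?_)
    (by simpa using ((hu.sub_const (limUnder atTop u)).norm.const_mul M))⟩
  calc ‖z t - exp (t • A) (limUnder atTop u)‖
      = ‖exp (t • A) (u t - limUnder atTop u)‖ := by
        rw [map_sub, exp_smul_apply_exp_neg_smul_apply]
    _ ≤ M * ‖u t - limUnder atTop u‖ :=
        (ContinuousLinearMap.le_opNorm _ _).trans (by gcongr; exact hM _)

end LinearFlow

section Oscillator

noncomputable def oscillatorCLM (α : ℝ) : (Fin 2 → ℝ) →L[ℝ] (Fin 2 → ℝ) :=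
  LinearMap.toContinuousLinearMap (Matrix.mulVecLin !![0, 1; -α, 0])

theorem oscillatorCLM_apply (α : ℝ) (v : Fin 2 → ℝ) : oscillatorCLM α v = !![0, 1; -α, 0] *ᵥ v := rfl

def oscillatorEnergy (α : ℝ) (v : Fin 2 → ℝ) : ℝ := α * v 0 ^ 2 + v 1 ^ 2

theorem oscillatorEnergy_exp_smul_apply (α t : ℝ) (v : Fin 2 → ℝ) :
    oscillatorEnergy α (exp (t • oscillatorCLM α) v) = oscillatorEnergy α v := by
  set w : ℝ → Fin 2 → ℝ := fun s => exp (s • oscillatorCLM α) v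
  have hE : ∀ s, HasDerivAt (fun r => oscillatorEnergy α (w r)) 0 s := by
    intro s
    have hw := hasDerivAt_pi.1 (hasDerivAt_exp_smul_apply (oscillatorCLM α) v s)
    have hw0 : HasDerivAt (fun r => w r 0) (w s 1) s := by
      simpa [oscillatorCLM_apply, Matrix.mulVec, dotProduct] using hw 0
    have hw1 : HasDerivAt (fun r => w r 1) (-(α * w s 0)) s := by
      simpa [oscillatorCLM_apply, Matrix.mulVec, dotProduct] using hw 1
    refine (((hw0.fun_pow 2).const_mul α).fun_add (hw1.fun_pow 2)).congr_deriv ?_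
    ring
  have := is_const_of_deriv_eq_zero (fun s => (hE s).differentiableAt) (fun s => (hE s).deriv) t 0
  simpa [w] using this

theorem min_mul_norm_sq_le_oscillatorEnergy (α : ℝ) (v : Fin 2 → ℝ) :
    min α 1 * ‖v‖ ^ 2 ≤ oscillatorEnergy α v := by
  have hv : ‖v‖ = max |v 0| |v 1| := by
    refine le_antisymm ((pi_norm_le_iff_of_nonneg (by positivity)).2 fun i => ?_) ?_
    · fin_cases i
      exacts [le_max_left _ _, le_max_right _ _]
    · exact max_le (norm_le_pi_norm v 0) (norm_le_pi_norm v 1)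
  have hα := min_le_left α 1
  have h1 := min_le_right α 1
  rw [hv, oscillatorEnergy]
  rcases le_total |v 0| |v 1| with h | h
  · rw [max_eq_right h, sq_abs]
    have h01 : v 0 ^ 2 ≤ v 1 ^ 2 := sq_le_sq.2 h
    rcases le_total 0 α with hα0 | hα0
    · nlinarith [sq_nonneg (v 0)]
    · nlinarith
  · rw [max_eq_left h, sq_abs]
    nlinarith [sq_nonneg (v 0), sq_nonneg (v 1)]

theorem oscillatorEnergy_le {α : ℝ} (hα : 0 ≤ α) (v : Fin 2 → ℝ) :
    oscillatorEnergy α v ≤ (α + 1) * ‖v‖ ^ 2 := by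
  have h0 : v 0 ^ 2 ≤ ‖v‖ ^ 2 := by
    simpa using pow_le_pow_left₀ (abs_nonneg _) (norm_le_pi_norm v 0) 2
  have h1 : v 1 ^ 2 ≤ ‖v‖ ^ 2 := by
    simpa using pow_le_pow_left₀ (abs_nonneg _) (norm_le_pi_norm v 1) 2
  rw [oscillatorEnergy]
  nlinarith

theorem norm_exp_smul_oscillatorCLM_le {α : ℝ} (hα : 0 < α) (t : ℝ) :
    ‖exp (t • oscillatorCLM α)‖ ≤ √((α + 1) / min α 1) := by
  have hc : 0 < min α 1 := lt_min hα one_pos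
  refine ContinuousLinearMap.opNorm_le_bound _ (Real.sqrt_nonneg _) fun v => ?_
  rw [← Real.sqrt_sq (norm_nonneg v), ← Real.sqrt_mul (by positivity)]
  refine Real.le_sqrt_of_sq_le ?_
  rw [div_mul_eq_mul_div, le_div_iff₀ hc, mul_comm]
  calc min α 1 * ‖exp (t • oscillatorCLM α) v‖ ^ 2 ≤ oscillatorEnergy α v := by
        simpa only [oscillatorEnergy_exp_smul_apply] using
          min_mul_norm_sq_le_oscillatorEnergy α (exp (t • oscillatorCLM α) v)
    _ ≤ (α + 1) * ‖v‖ ^ 2 := oscillatorEnergy_le hα.le v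

end Oscillator

theorem forced_oscillator_asymptotic_to_free_general (α₁ K lam : ℝ) (hα₁ : 0 < α₁)
    (hlam : 0 < lam)
    (f z : ℝ → Fin 2 → ℝ) (hf : Continuous f)
    (hfb : ∀ t : ℝ, 0 ≤ t → ‖f t‖ ≤ K * Real.exp (-lam * t))
    (hz : ∀ t i, HasDerivAt (fun s => z s i)
      (((!![0, 1; -α₁, 0]) *ᵥ z t + f t) i) t) :
    ∃ z₀ : ℝ → Fin 2 → ℝ,
      (∀ t i, HasDerivAt (fun s => z₀ s i) (((!![0, 1; -α₁, 0]) *ᵥ z₀ t) i) t) ∧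
      Filter.Tendsto (fun t => ‖z t - z₀ t‖) Filter.atTop (nhds 0) := by
  have hz' : ∀ t, HasDerivAt z (oscillatorCLM α₁ (z t) + f t) t := fun t => hasDerivAt_pi.2 (hz t)
  have hfi : IntegrableOn f (Ioi 0) :=
    ((exp_neg_integrableOn_Ioi 0 hlam).const_mul K).mono' hf.aestronglyMeasurable.restrict
      ((ae_restrict_mem measurableSet_Ioi).mono fun t ht => hfb t (le_of_lt ht))
  obtain ⟨v, hv⟩ := exists_tendsto_sub_exp_smul_apply (oscillatorCLM α₁)
    (norm_exp_smul_oscillatorCLM_le hα₁) hfi hz'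
  exact ⟨fun t => exp (t • oscillatorCLM α₁) v,
    fun t => hasDerivAt_pi.1 (hasDerivAt_exp_smul_apply _ v t), by simpa using hv.norm⟩

/-- With `A = [[0,1],[−α₁,0]]`, `α₁ > 0`, and `f` continuous with
`‖f(t)‖ ≤ K e^{−λt}` for `t ≥ 0`, any solution `z` of `ż = Az + f` converges to
some solution `z₀` of the unforced equation `ż₀ = Az₀`: `‖z(t) − z₀(t)‖ → 0`. -/
theorem forced_oscillator_asymptotic_to_free (α₁ K lam : ℝ) (hα₁ : 0 < α₁)
    (hK : 0 ≤ K) (hlam : 0 < lam)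
    (f z : ℝ → Fin 2 → ℝ) (hf : Continuous f)
    (hfb : ∀ t : ℝ, 0 ≤ t → ‖f t‖ ≤ K * Real.exp (-lam * t))
    (hz : ∀ t i, HasDerivAt (fun s => z s i)
      (((!![0, 1; -α₁, 0]) *ᵥ z t + f t) i) t) :
    ∃ z₀ : ℝ → Fin 2 → ℝ,
      (∀ t i, HasDerivAt (fun s => z₀ s i) (((!![0, 1; -α₁, 0]) *ᵥ z₀ t) i) t) ∧
      Filter.Tendsto (fun t => ‖z t - z₀ t‖) Filter.atTop (nhds 0) :=
  forced_oscillator_asymptotic_to_free_general α₁ K lam hα₁ hlam f z hf hfb hz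
end
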